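/- Let X be an EFX partial allocation with pool P. Let ℓ ≥ 1, let g_0,…,g_{ℓ−1} ∈ P be pairwise distinct goods, s_0,…,s_{ℓ−1} pairwise distinct sources of the envy-graph G_X, and t_1,…,t_ℓ pairwise distinct agents (indices interpreted modulo ℓ, so t_0 = t_ℓ). For each i ∈ {0,…,ℓ−1} let Z_i be an inclusion-wise minimal envied subset of X_{s_i} ∪ {g_i} with v_{t_{i+1}}(Z_i) > v_{t_{i+1}}(X_{t_{i+1}}), and let s_i = u^i_0 → u^i_1 → ⋯ → u^i_{m_i} = t_i be a directed path in G_X from s_i to t_i, where the ℓ paths are pairwise vertex-disjoint. Define X' by: X'_{u^i_k} = X_{u^i_{k+1}} for all 0 ≤ k ≤ m_i − 1 and all i; X'_{t_i} = Z_{i−1} for all i ∈ {1,…,ℓ}; and X'_j = X_j for every agent j not lying on any of the paths. Then X' is an EFX partial allocation and φ(X') > φ(X). -/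
import Mathlib


/-- `X` is an EFX (partial) allocation for valuations `v`. -/
def EFX {G : Type} [DecidableEq G] {n : ℕ} (v : Fin n → Finset G → ℝ)
    (X : Fin n → Finset G) : Prop :=
  ∀ i j : Fin n, ∀ g ∈ X j, v i (X j \ {g}) ≤ v i (X i)

/-- Edge of the envy-graph: `i` envies `j`. -/
def EnvyEdge {G : Type} [DecidableEq G] {n : ℕ} (v : Fin n → Finset G → ℝ)
    (X : Fin n → Finset G) (i j : Fin n) : Prop :=
  v i (X i) < v i (X j)

/-- `s` is a source of the envy-graph of `X`: no agent envies `s`. -/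
def IsSource {G : Type} [DecidableEq G] {n : ℕ} (v : Fin n → Finset G → ℝ)
    (X : Fin n → Finset G) (s : Fin n) : Prop :=
  ∀ j : Fin n, ¬ EnvyEdge v X j s

/-- A set `S` is envied (with respect to allocation `X`). -/
def Envied {G : Type} [DecidableEq G] {n : ℕ} (v : Fin n → Finset G → ℝ)
    (X : Fin n → Finset G) (S : Finset G) : Prop :=
  ∃ i : Fin n, v i (X i) < v i S

/-- `Z` is an inclusion-wise minimal envied subset of `S` (with respect to `X`). -/
def MinEnviedSubset {G : Type} [DecidableEq G] {n : ℕ} (v : Fin n → Finset G → ℝ)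
    (X : Fin n → Finset G) (Z S : Finset G) : Prop :=
  Z ⊆ S ∧ Envied v X Z ∧ ∀ Z' ⊂ Z, ¬ Envied v X Z'

lemma prev_next_aux (ℓ i : ℕ) (hℓ : 1 ≤ ℓ) (hi : i < ℓ) :
    ((i + ℓ - 1) % ℓ + 1) % ℓ = i := by
  rcases Nat.eq_zero_or_pos i with rfl | hpos
  · rw [show 0 + ℓ - 1 = ℓ - 1 from by omega,
      show (ℓ - 1) % ℓ = ℓ - 1 from Nat.mod_eq_of_lt (by omega),
      show ℓ - 1 + 1 = ℓ from by omega, Nat.mod_self]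
  · rw [show i + ℓ - 1 = (i - 1) + ℓ from by omega, Nat.add_mod_right,
      Nat.mod_eq_of_lt (by omega : i - 1 < ℓ), show i - 1 + 1 = i from by omega,
      Nat.mod_eq_of_lt hi]

/-- Rule `U₂`: shifting bundles along vertex-disjoint envy paths from the sources
`s i` to the agents `t i`, and giving `t i` the minimal envied subset `Z (i-1)` of
`X (s (i-1)) ∪ {g (i-1)}`, yields an EFX allocation with strictly larger social welfare. -/
theorem rule_U2
    {G : Type} [DecidableEq G] (M : Finset G) {n : ℕ}
    (v : Fin n → Finset G → ℝ)
    (hnorm : ∀ i, v i ∅ = 0)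
    (hmono : ∀ i, ∀ S T : Finset G, S ⊆ T → v i S ≤ v i T)
    (X X' : Fin n → Finset G)
    (hsub : ∀ i, X i ⊆ M)
    (hdisj : ∀ i j, i ≠ j → Disjoint (X i) (X j))
    (hEFX : EFX v X)
    (ℓ : ℕ) (hℓ : 1 ≤ ℓ)
    (g : Fin ℓ → G) (hginj : Function.Injective g)
    (hgP : ∀ i, g i ∈ M \ Finset.univ.biUnion X)
    (s : Fin ℓ → Fin n) (hsinj : Function.Injective s)
    (hsrc : ∀ i, IsSource v X (s i))
    (t : Fin ℓ → Fin n) (htinj : Function.Injective t)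
    (Z : Fin ℓ → Finset G)
    (hZmin : ∀ i : Fin ℓ, MinEnviedSubset v X (Z i) (X (s i) ∪ {g i}))
    (hZenvy : ∀ i : Fin ℓ,
      v (t ⟨(i.val + 1) % ℓ, Nat.mod_lt _ (by omega)⟩)
          (X (t ⟨(i.val + 1) % ℓ, Nat.mod_lt _ (by omega)⟩))
        < v (t ⟨(i.val + 1) % ℓ, Nat.mod_lt _ (by omega)⟩) (Z i))
    -- the paths `u i 0 → u i 1 → ⋯ → u i (m i)` from `s i` to `t i` in the envy-graph
    (m : Fin ℓ → ℕ) (u : Fin ℓ → ℕ → Fin n)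
    (hu0 : ∀ i, u i 0 = s i)
    (hulast : ∀ i, u i (m i) = t i)
    (hupath : ∀ i : Fin ℓ, ∀ k < m i, EnvyEdge v X (u i k) (u i (k + 1)))
    (hpathsdisj : ∀ i i' : Fin ℓ, ∀ k k' : ℕ, k ≤ m i → k' ≤ m i' →
      (i ≠ i' ∨ k ≠ k') → u i k ≠ u i' k')
    -- definition of the new allocation `X'`
    (hX'shift : ∀ i : Fin ℓ, ∀ k < m i, X' (u i k) = X (u i (k + 1)))
    (hX't : ∀ i : Fin ℓ, X' (t i) = Z ⟨(i.val + ℓ - 1) % ℓ, Nat.mod_lt _ (by omega)⟩)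
    (hX'other : ∀ j : Fin n, (∀ i : Fin ℓ, ∀ k ≤ m i, u i k ≠ j) → X' j = X j) :
    (∀ j, X' j ⊆ M) ∧
    (∀ j k, j ≠ k → Disjoint (X' j) (X' k)) ∧
    EFX v X' ∧
    ∑ j, v j (X j) < ∑ j, v j (X' j) := by
  classical
  have hℓpos : 0 < ℓ := hℓ
  set P : Fin ℓ → Fin ℓ := fun i => ⟨(i.val + ℓ - 1) % ℓ, Nat.mod_lt _ (by omega)⟩ with hP
  have hPnext : ∀ i : Fin ℓ, ((P i).val + 1) % ℓ = i.val := fun i =>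
    prev_next_aux ℓ i.val hℓ i.isLt
  have hPinj : Function.Injective P := by
    intro i i' h
    apply Fin.ext
    rw [← hPnext i, ← hPnext i', h]
  have hgnotin : ∀ (i : Fin ℓ) (w : Fin n), g i ∉ X w := by
    intro i w hw
    have h := hgP i
    rw [Finset.mem_sdiff] at h
    exact h.2 (Finset.mem_biUnion.mpr ⟨w, Finset.mem_univ _, hw⟩)
  have huniq : ∀ (i i' : Fin ℓ) (k k' : ℕ), k ≤ m i → k' ≤ m i' → u i k = u i' k' →
      i = i' ∧ k = k' := by
    intro i i' k k' hk hk' he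
    by_contra hc
    exact hpathsdisj i i' k k' hk hk' (not_and_or.mp hc) he
  -- `Z (P i)` is what `t i` receives, and `t i` envies it
  have hZt : ∀ i : Fin ℓ, v (t i) (X (t i)) < v (t i) (Z (P i)) := by
    intro i
    have key := hZenvy (P i)
    have heq : (⟨((P i).val + 1) % ℓ, Nat.mod_lt _ (by omega)⟩ : Fin ℓ) = i :=
      Fin.ext (hPnext i)
    rwa [heq] at key
  have hX'tP : ∀ i : Fin ℓ, X' (t i) = Z (P i) := fun i => hX't i
  -- every agent weakly improves, and strictly if on a path
  have himpA : ∀ j : Fin n, (∃ i p, p ≤ m i ∧ u i p = j) → v j (X j) < v j (X' j) := by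
    rintro j ⟨i, p, hp, rfl⟩
    rcases lt_or_eq_of_le hp with hlt | heq
    · rw [hX'shift i p hlt]
      exact hupath i p hlt
    · have ht : u i p = t i := by rw [heq, hulast]
      rw [ht, hX'tP i]
      exact hZt i
  have himpAle : ∀ j : Fin n, v j (X j) ≤ v j (X' j) := by
    intro j
    by_cases h : ∃ i p, p ≤ m i ∧ u i p = j
    · exact le_of_lt (himpA j h)
    · push_neg at h
      rw [hX'other j h]
  -- every new bundle, minus any good, is not envied relative to old bundles
  have himpB : ∀ j k : Fin n, ∀ a ∈ X' k, v j (X' k \ {a}) ≤ v j (X j) := by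
    intro j k a ha
    by_cases h : ∃ i p, p ≤ m i ∧ u i p = k
    · obtain ⟨i, p, hp, rfl⟩ := h
      rcases lt_or_eq_of_le hp with hlt | heq
      · rw [hX'shift i p hlt] at ha ⊢
        exact hEFX j _ a ha
      · have ht : u i p = t i := by rw [heq, hulast]
        rw [ht, hX'tP i] at ha ⊢
        have hss : Z (P i) \ {a} ⊂ Z (P i) :=
          Finset.sdiff_ssubset (Finset.singleton_subset_iff.mpr ha)
            (Finset.singleton_nonempty a)
        have := (hZmin (P i)).2.2 _ hss
        rw [Envied] at this
        push_neg at this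
        exact this j
    · push_neg at h
      rw [hX'other k h] at ha ⊢
      exact hEFX j k a ha
  -- classification of new bundles
  have hclass : ∀ j : Fin n,
      (∃ i p, p < m i ∧ u i p = j ∧ X' j = X (u i (p + 1))) ∨
      (∃ i : Fin ℓ, u i (m i) = j ∧ X' j = Z (P i)) ∨
      ((∀ i : Fin ℓ, ∀ p ≤ m i, u i p ≠ j) ∧ X' j = X j) := by
    intro j
    by_cases h : ∃ i p, p ≤ m i ∧ u i p = j
    · obtain ⟨i, p, hp, rfl⟩ := h
      rcases lt_or_eq_of_le hp with hlt | heq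
      · exact Or.inl ⟨i, p, hlt, rfl, hX'shift i p hlt⟩
      · refine Or.inr (Or.inl ⟨i, by rw [heq], ?_⟩)
        have ht : u i p = t i := by rw [heq, hulast]
        rw [ht, hX'tP i]
    · push_neg at h
      exact Or.inr (Or.inr ⟨h, hX'other j h⟩)
  -- disjointness helpers
  have hDZX : ∀ (i₀ : Fin ℓ) (w : Fin n), w ≠ s i₀ → Disjoint (Z i₀) (X w) := by
    intro i₀ w hw
    refine Finset.disjoint_of_subset_left (hZmin i₀).1 ?_
    rw [Finset.disjoint_union_left]
    exact ⟨hdisj _ _ (fun he => hw he.symm) |>.symm |>.symm, by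
      rw [Finset.disjoint_singleton_left]; exact hgnotin i₀ w⟩
  have hDZZ : ∀ i₀ i₁ : Fin ℓ, i₀ ≠ i₁ → Disjoint (Z i₀) (Z i₁) := by
    intro i₀ i₁ h
    refine Finset.disjoint_of_subset_left (hZmin i₀).1
      (Finset.disjoint_of_subset_right (hZmin i₁).1 ?_)
    rw [Finset.disjoint_union_left, Finset.disjoint_union_right,
      Finset.disjoint_union_right, Finset.disjoint_singleton_right,
      Finset.disjoint_singleton_left, Finset.disjoint_singleton_left]
    refine ⟨⟨hdisj _ _ (fun he => h (hsinj he)), hgnotin i₁ (s i₀)⟩,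
      hgnotin i₀ (s i₁), fun he => h (hginj (Finset.mem_singleton.mp he))⟩
  refine ⟨?_, ?_, ?_, ?_⟩
  · -- subsets of M
    intro j
    rcases hclass j with ⟨i, p, hlt, huij, hXe⟩ | ⟨i, huij, hXe⟩ | ⟨hoff, hXe⟩
    · rw [hXe]; exact hsub _
    · rw [hXe]
      refine (hZmin (P i)).1.trans (Finset.union_subset (hsub _) ?_)
      rw [Finset.singleton_subset_iff]
      exact (Finset.mem_sdiff.mp (hgP (P i))).1
    · rw [hXe]; exact hsub _
  · -- pairwise disjoint
    intro j k hjk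
    rcases hclass j with ⟨i, p, hlt, huij, hXj⟩ | ⟨i, huij, hXj⟩ | ⟨hoffj, hXj⟩ <;>
      rcases hclass k with ⟨i', p', hlt', huik, hXk⟩ | ⟨i', huik, hXk⟩ | ⟨hoffk, hXk⟩ <;>
      rw [hXj, hXk]
    · -- both shifted
      refine hdisj _ _ (fun he => ?_)
      obtain ⟨hii, hpp⟩ := huniq i i' (p + 1) (p' + 1) hlt hlt' he
      exact hjk (by rw [← huij, ← huik, hii, Nat.succ_injective hpp])
    · -- shifted vs Z
      refine (hDZX (P i') (u i (p + 1)) (fun he => ?_)).symm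
      rw [← hu0 (P i')] at he
      exact Nat.succ_ne_zero p (huniq i (P i') (p + 1) 0 hlt (Nat.zero_le _) he).2
    · -- shifted vs off-path
      exact hdisj _ _ (fun he => hoffk i (p + 1) hlt he)
    · -- Z vs shifted
      refine hDZX (P i) (u i' (p' + 1)) (fun he => ?_)
      rw [← hu0 (P i)] at he
      exact Nat.succ_ne_zero p' (huniq i' (P i) (p' + 1) 0 hlt' (Nat.zero_le _) he).2
    · -- Z vs Z
      refine hDZZ _ _ (fun he => ?_)
      exact hjk (by rw [← huij, ← huik, hPinj he])
    · -- Z vs off-path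
      refine hDZX (P i) k (fun he => ?_)
      exact hoffk (P i) 0 (Nat.zero_le _) ((hu0 (P i)).trans he.symm)
    · -- off-path vs shifted
      exact (hdisj _ _ (fun he => hoffj i' (p' + 1) hlt' he.symm))
    · -- off-path vs Z
      refine (hDZX (P i') j (fun he => ?_)).symm
      exact hoffj (P i') 0 (Nat.zero_le _) ((hu0 (P i')).trans he.symm)
    · exact hdisj _ _ hjk
  · -- EFX
    intro j k a ha
    exact (himpB j k a ha).trans (himpAle j)
  · -- welfare increases
    refine Finset.sum_lt_sum (fun j _ => himpAle j) ?_
    exact ⟨s ⟨0, hℓpos⟩, Finset.mem_univ _,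
      himpA _ ⟨⟨0, hℓpos⟩, 0, Nat.zero_le _, hu0 _⟩⟩
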